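/- Let a, b, c > 0 and h ∈ ℝ with |h| < b. Set L₁ = 2π/√(a² + h²), c₁ = a² + h², L₂ = 4π b c/√(b² − h²), c₂ = h² − b². Then the inequality ∫₀^{L₁}(u₁'(s)² − c₁·u₁(s)²) ds + ∫₀^{L₂}(u₂'(s)² − c₂·u₂(s)²) ds ≥ 0 holds for every pair of C¹ functions u₁, u₂ : ℝ → ℝ with uᵢ Lᵢ-periodic and ∫₀^{L₁} u₁ + ∫₀^{L₂} u₂ = 0, if and only if (a² + h²)^{3/2}/(2π) − (b² − h²)^{3/2}/(4π b c) ≤ 0. -/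

import Mathlib

/-!
By Parseval's identity, a `C¹` function `u` of period `L` satisfies Wirtinger's inequality
`∫ u'² ≥ (2π/L)² (∫ u² - (∫ u)²/L)`, the Fourier mode `n ≠ 0` of `u` being `L/(2πn)` times that
of `u'`. On the spherical curve `c₁ = a² + h²` is exactly `(2π/L₁)²`, and `c₂ < 0` on the
hyperbolic one, so each boundary term of the index form is at least `-cᵢ (∫ uᵢ)² / Lᵢ`. Since
`∫ u₂ = -∫ u₁`, the form is bounded below by `-(c₁/L₁ + c₂/L₂) (∫ u₁)²`, a bound attained by the
constant pair `(1/L₁, -1/L₂)`; and `c₁/L₁ + c₂/L₂` is the quantity in the statement.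
-/

open MeasureTheory Set Complex
open scoped Interval

lemma ContinuousOn.memLp_two_restrict_Ioc {E : Type*} [NormedAddCommGroup E] {f : ℝ → E}
    {a b : ℝ} (hf : ContinuousOn f [[a, b]]) : MemLp f 2 (volume.restrict (Ioc a b)) := by
  have hsub : Ioc a b ⊆ [[a, b]] := Ioc_subset_Icc_self.trans Icc_subset_uIcc
  refine (memLp_two_iff_integrable_sq_norm ?_).2 ?_
  · exact (hf.mono hsub).aestronglyMeasurable measurableSet_Ioc
  · exact ((hf.norm.pow 2).integrableOn_compact isCompact_uIcc).mono_set hsub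

lemma two_pi_mul_norm_fourierCoeffOn_le {a b : ℝ} (hab : a < b) {f f' : ℝ → ℂ} {n : ℤ}
    (hn : n ≠ 0) (hf : ∀ x ∈ [[a, b]], HasDerivAt f (f' x) x)
    (hf' : IntervalIntegrable f' volume a b) (hfab : f a = f b) :
    2 * Real.pi * ‖fourierCoeffOn hab f n‖ ≤ (b - a) * ‖fourierCoeffOn hab f' n‖ := by
  have hn' : (1 : ℝ) ≤ |(n : ℝ)| := by exact_mod_cast Int.one_le_abs hn
  have hnorm : ‖-2 * (Real.pi : ℂ) * I * n‖ = 2 * Real.pi * |(n : ℝ)| := by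
    simp [abs_of_pos Real.pi_pos]
  have key : 2 * Real.pi * |(n : ℝ)| * ‖fourierCoeffOn hab f n‖ =
      (b - a) * ‖fourierCoeffOn hab f' n‖ := by
    rw [fourierCoeffOn_of_hasDerivAt hab hn hf hf', hfab, sub_self, mul_zero, zero_sub, norm_mul,
      norm_neg, norm_mul, norm_div, norm_one, hnorm, ← ofReal_sub, norm_real,
      Real.norm_of_nonneg (sub_pos.2 hab).le]
    field_simp
  rw [← key]
  exact le_mul_of_one_le_right (by positivity) hn' |>.trans_eq (by ring)

lemma integral_norm_sq_sub_le_of_hasDerivAt {a b : ℝ} (hab : a < b) {f f' : ℝ → ℂ}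
    (hf : ∀ x ∈ [[a, b]], HasDerivAt f (f' x) x) (hf' : ContinuousOn f' [[a, b]])
    (hfab : f a = f b) :
    (∫ x in a..b, ‖f x‖ ^ 2) - ‖∫ x in a..b, f x‖ ^ 2 / (b - a) ≤
      ((b - a) / (2 * Real.pi)) ^ 2 * ∫ x in a..b, ‖f' x‖ ^ 2 := by
  have hT : 0 < b - a := sub_pos.2 hab
  have hcont : ContinuousOn f [[a, b]] := fun x hx ↦ (hf x hx).continuousAt.continuousWithinAt
  have parseval := hasSum_sq_fourierCoeffOn hab hcont.memLp_two_restrict_Ioc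
  have parseval' := hasSum_sq_fourierCoeffOn hab hf'.memLp_two_restrict_Ioc
  have hc₀ : ‖fourierCoeffOn hab f 0‖ = ‖∫ x in a..b, f x‖ / (b - a) := by
    simp [fourierCoeffOn_eq_integral, -ofReal_sub, abs_of_pos hT, div_eq_inv_mul]
  -- The zeroth mode is the mean of `f`; every other mode is controlled by that of `f'`.
  have hterm : ∀ n, ‖fourierCoeffOn hab f n‖ ^ 2 ≤
      (if n = 0 then ‖fourierCoeffOn hab f 0‖ ^ 2 else 0) +
        ((b - a) / (2 * Real.pi)) ^ 2 * ‖fourierCoeffOn hab f' n‖ ^ 2 := by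
    intro n
    rcases eq_or_ne n 0 with rfl | hn
    · simp only [if_true]
      exact le_add_of_nonneg_right (by positivity)
    · rw [if_neg hn, zero_add, ← mul_pow]
      gcongr
      rw [div_mul_eq_mul_div, le_div_iff₀ (by positivity), mul_comm]
      exact two_pi_mul_norm_fourierCoeffOn_le hab hn hf hf'.intervalIntegrable hfab
  have := hasSum_le hterm parseval ((hasSum_ite_eq 0 _).add (parseval'.mul_left _))
  rw [hc₀, smul_eq_mul, smul_eq_mul] at this
  field_simp at this ⊢
  linarith

lemma sq_integral_div_le_integral_sq {a b : ℝ} (hab : a < b) {u : ℝ → ℝ}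
    (hu : ContinuousOn u [[a, b]]) :
    (∫ x in a..b, u x) ^ 2 / (b - a) ≤ ∫ x in a..b, u x ^ 2 := by
  set m := (∫ x in a..b, u x) / (b - a)
  have hexpand : ∫ x in a..b, (u x - m) ^ 2 =
      (∫ x in a..b, u x ^ 2) - (∫ x in a..b, u x) ^ 2 / (b - a) := by
    have hu2 : IntervalIntegrable (fun x ↦ u x ^ 2) volume a b := (hu.pow 2).intervalIntegrable
    have hmu : IntervalIntegrable (fun x ↦ 2 * m * u x) volume a b :=
      (hu.const_smul (2 * m)).intervalIntegrable
    simp_rw [show ∀ x, (u x - m) ^ 2 = u x ^ 2 - 2 * m * u x + m ^ 2 from fun x ↦ by ring]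
    rw [intervalIntegral.integral_add (hu2.sub hmu) intervalIntegrable_const,
      intervalIntegral.integral_sub hu2 hmu, intervalIntegral.integral_const_mul,
      intervalIntegral.integral_const, smul_eq_mul]
    have hT : b - a ≠ 0 := (sub_pos.2 hab).ne'
    simp only [m]
    field_simp
    ring
  have : 0 ≤ ∫ x in a..b, (u x - m) ^ 2 :=
    intervalIntegral.integral_nonneg hab.le fun x _ ↦ sq_nonneg (u x - m)
  linarith

lemma integral_sq_sub_le_of_contDiff {a b : ℝ} (hab : a < b) {u : ℝ → ℝ} (hu : ContDiff ℝ 1 u)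
    (hu_ab : u a = u b) :
    (∫ x in a..b, u x ^ 2) - (∫ x in a..b, u x) ^ 2 / (b - a) ≤
      ((b - a) / (2 * Real.pi)) ^ 2 * ∫ x in a..b, deriv u x ^ 2 := by
  have := integral_norm_sq_sub_le_of_hasDerivAt hab (f := fun x ↦ (u x : ℂ))
    (f' := fun x ↦ ((deriv u x : ℝ) : ℂ))
    (fun x _ ↦ ((hu.differentiable one_ne_zero) x).hasDerivAt.ofReal_comp)
    (continuous_ofReal.comp (hu.continuous_deriv le_rfl)).continuousOn (by simp [hu_ab])
  simpa only [norm_real, Real.norm_eq_abs, sq_abs, intervalIntegral.integral_ofReal] using this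

/-- The index form on one boundary curve of `Ω`, of length `L`, with potential `c = K + h²`. -/
noncomputable def indexForm (L c : ℝ) (u : ℝ → ℝ) : ℝ :=
  ∫ s in (0 : ℝ)..L, (deriv u s ^ 2 - c * u s ^ 2)

lemma indexForm_eq_sub {L : ℝ} (c : ℝ) {u : ℝ → ℝ} (hu : ContDiff ℝ 1 u) :
    indexForm L c u = (∫ s in (0 : ℝ)..L, deriv u s ^ 2) - c * ∫ s in (0 : ℝ)..L, u s ^ 2 := by
  have hu' : IntervalIntegrable (fun s ↦ deriv u s ^ 2) volume 0 L :=
    ((hu.continuous_deriv le_rfl).pow 2).intervalIntegrable _ _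
  have hu2 : IntervalIntegrable (fun s ↦ c * u s ^ 2) volume 0 L :=
    ((hu.continuous.pow 2).const_smul c).intervalIntegrable _ _
  rw [indexForm, intervalIntegral.integral_sub hu' hu2, intervalIntegral.integral_const_mul]

lemma neg_mul_sq_integral_div_le_indexForm {L c : ℝ} (hL : 0 < L)
    (hc : c ≤ (2 * Real.pi / L) ^ 2) {u : ℝ → ℝ} (hu : ContDiff ℝ 1 u)
    (hper : Function.Periodic u L) :
    -c * (∫ s in (0 : ℝ)..L, u s) ^ 2 / L ≤ indexForm L c u := by
  have hu0 : u 0 = u L := by simpa using (hper 0).symm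
  have hvar := sq_integral_div_le_integral_sq hL hu.continuous.continuousOn
  have hwirt := integral_sq_sub_le_of_contDiff hL hu hu0
  rw [sub_zero] at hvar hwirt
  set A := ∫ s in (0 : ℝ)..L, u s
  set V := (∫ s in (0 : ℝ)..L, u s ^ 2) - A ^ 2 / L
  set D := ∫ s in (0 : ℝ)..L, deriv u s ^ 2
  have hcV : c * V ≤ D := calc
    c * V ≤ (2 * Real.pi / L) ^ 2 * V := mul_le_mul_of_nonneg_right hc (by linarith)
    _ ≤ (2 * Real.pi / L) ^ 2 * ((L / (2 * Real.pi)) ^ 2 * D) := by gcongr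
    _ = D := by field_simp
  rw [indexForm_eq_sub c hu]
  linarith [show -c * A ^ 2 / L = c * V - c * ∫ s in (0 : ℝ)..L, u s ^ 2 by ring]

lemma indexForm_const (L c k : ℝ) : indexForm L c (fun _ ↦ k) = -(c * k ^ 2 * L) := by
  simp [indexForm]
  ring

theorem indexForm_add_nonneg_iff {L₁ L₂ c₁ c₂ : ℝ} (hL₁ : 0 < L₁) (hL₂ : 0 < L₂)
    (hc₁ : c₁ ≤ (2 * Real.pi / L₁) ^ 2) (hc₂ : c₂ ≤ (2 * Real.pi / L₂) ^ 2) :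
    (∀ u₁ u₂ : ℝ → ℝ, ContDiff ℝ 1 u₁ → ContDiff ℝ 1 u₂ →
      Function.Periodic u₁ L₁ → Function.Periodic u₂ L₂ →
      (∫ s in (0 : ℝ)..L₁, u₁ s) + (∫ s in (0 : ℝ)..L₂, u₂ s) = 0 →
      0 ≤ indexForm L₁ c₁ u₁ + indexForm L₂ c₂ u₂) ↔ c₁ / L₁ + c₂ / L₂ ≤ 0 := by
  constructor
  · intro H
    have hmean : (∫ _ in (0 : ℝ)..L₁, 1 / L₁) + (∫ _ in (0 : ℝ)..L₂, -(1 / L₂)) = 0 := by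
      simp [hL₁.ne', hL₂.ne']
    have := H _ _ contDiff_const contDiff_const (fun _ ↦ rfl) (fun _ ↦ rfl) hmean
    have hconst : ∀ {L c : ℝ}, L ≠ 0 → c * (1 / L) ^ 2 * L = c / L := fun hL ↦ by field_simp
    rw [indexForm_const, indexForm_const, neg_sq, hconst hL₁.ne', hconst hL₂.ne'] at this
    linarith
  · intro hsum u₁ u₂ hu₁ hu₂ hp₁ hp₂ hmean
    have h₁ := neg_mul_sq_integral_div_le_indexForm hL₁ hc₁ hu₁ hp₁
    have h₂ := neg_mul_sq_integral_div_le_indexForm hL₂ hc₂ hu₂ hp₂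
    rw [eq_neg_of_add_eq_zero_right hmean, neg_sq] at h₂
    set A := ∫ s in (0 : ℝ)..L₁, u₁ s
    calc 0 ≤ -(c₁ / L₁ + c₂ / L₂) * A ^ 2 := mul_nonneg (by linarith) (sq_nonneg A)
      _ = -c₁ * A ^ 2 / L₁ + -c₂ * A ^ 2 / L₂ := by ring
      _ ≤ _ := add_le_add h₁ h₂

lemma rpow_three_halves {x : ℝ} (hx : 0 ≤ x) : x ^ ((3 : ℝ) / 2) = x * √x := by
  rw [show (3 : ℝ) / 2 = 1 + 1 / 2 by norm_num, Real.rpow_add' hx (by norm_num), Real.rpow_one,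
    Real.sqrt_eq_rpow]

/-- Analytic content of Lemma 4.2 (le:ejemplo): for the union of a spherical
disk of boundary curvature `h` (boundary length `L₁ = 2π/√(a²+h²)`, potential
`c₁ = a²+h²`) and a symmetric hyperbolic annulus (boundary length
`L₂ = 4πbc/√(b²−h²)`, potential `c₂ = h²−b²`), the index form is nonnegative
on all pairs of periodic `C¹` functions with total mean zero iff
`(a²+h²)^{3/2}/(2π) − (b²−h²)^{3/2}/(4πbc) ≤ 0`. -/
theorem stmt_15 (a b c h : ℝ) (ha : 0 < a) (hb : 0 < b) (hc : 0 < c)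
    (hh : |h| < b)
    (L₁ L₂ c₁ c₂ : ℝ)
    (hL₁ : L₁ = 2 * Real.pi / Real.sqrt (a ^ 2 + h ^ 2))
    (hL₂ : L₂ = 4 * Real.pi * b * c / Real.sqrt (b ^ 2 - h ^ 2))
    (hc₁ : c₁ = a ^ 2 + h ^ 2) (hc₂ : c₂ = h ^ 2 - b ^ 2) :
    (∀ u₁ u₂ : ℝ → ℝ, ContDiff ℝ 1 u₁ → ContDiff ℝ 1 u₂ →
      Function.Periodic u₁ L₁ → Function.Periodic u₂ L₂ →
      (∫ s in (0:ℝ)..L₁, u₁ s) + (∫ s in (0:ℝ)..L₂, u₂ s) = 0 →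
      0 ≤ (∫ s in (0:ℝ)..L₁, ((deriv u₁ s) ^ 2 - c₁ * (u₁ s) ^ 2)) +
          (∫ s in (0:ℝ)..L₂, ((deriv u₂ s) ^ 2 - c₂ * (u₂ s) ^ 2))) ↔
    (a ^ 2 + h ^ 2) ^ ((3:ℝ) / 2) / (2 * Real.pi) -
      (b ^ 2 - h ^ 2) ^ ((3:ℝ) / 2) / (4 * Real.pi * b * c) ≤ 0 := by
  have hah : 0 < a ^ 2 + h ^ 2 := by positivity
  have hbh : 0 < b ^ 2 - h ^ 2 := sub_pos.2 (sq_lt_sq' (abs_lt.1 hh).1 (abs_lt.1 hh).2)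
  have hL₁pos : 0 < L₁ := hL₁ ▸ div_pos Real.two_pi_pos (Real.sqrt_pos.2 hah)
  have hL₂pos : 0 < L₂ := hL₂ ▸ div_pos (by positivity) (Real.sqrt_pos.2 hbh)
  have hc₁_sq : c₁ = (2 * Real.pi / L₁) ^ 2 := by
    rw [hL₁, div_div_cancel₀ Real.two_pi_pos.ne', Real.sq_sqrt hah.le, hc₁]
  have hc₂_le : c₂ ≤ (2 * Real.pi / L₂) ^ 2 := by
    rw [hc₂]
    linarith [sq_nonneg (2 * Real.pi / L₂)]
  refine (indexForm_add_nonneg_iff hL₁pos hL₂pos hc₁_sq.le hc₂_le).trans ?_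
  have hratio₁ : c₁ / L₁ = (a ^ 2 + h ^ 2) ^ ((3 : ℝ) / 2) / (2 * Real.pi) := by
    rw [hc₁, hL₁, rpow_three_halves hah.le, div_div_eq_mul_div]
  have hratio₂ : c₂ / L₂ = -((b ^ 2 - h ^ 2) ^ ((3 : ℝ) / 2) / (4 * Real.pi * b * c)) := by
    rw [hc₂, hL₂, rpow_three_halves hbh.le, div_div_eq_mul_div, ← neg_sub, neg_mul, neg_div]
  rw [hratio₁, hratio₂, ← sub_eq_add_neg]
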